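/- The map eval, restricted to the set of valid sequences, is a bijection onto the rational numbers: every rational number is eval(l) for exactly one valid sequence l (its natural representation). -/

import Mathlib

/-- A list of integers is a *valid sequence* if it is nonempty and every entry
other than the first and the last is nonzero. -/
def Valid (l : List ℤ) : Prop :=
  l ≠ [] ∧ ∀ x ∈ (l.drop 1).dropLast, x ≠ 0

/-- The evaluation of a sequence as a rational number:
`eval [s₀] = s₀`, and `eval (s₀ :: s₁ :: rest)` is
`s₀ - 1/(2 + eval (s₁ :: rest))` if `s₁ ≥ 0`, and
`s₀ - 1 + 1/(2 + eval ((-s₁) :: (-rest)))` if `s₁ < 0`. -/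
def eval : List ℤ → ℚ
  | [] => 0
  | [s] => (s : ℚ)
  | s₀ :: s₁ :: rest =>
    if 0 ≤ s₁ then (s₀ : ℚ) - 1 / (2 + eval (s₁ :: rest))
    else (s₀ : ℚ) - 1 + 1 / (2 + eval ((s₁ :: rest).map (fun x => -x)))
termination_by l => l.length
decreasing_by all_goals simp

lemma eval_singleton (a : ℤ) : eval [a] = a := by simp [eval]

lemma eval_cons_cons (a b : ℤ) (s : List ℤ) :
    eval (a :: b :: s) =
      if 0 ≤ b then (a : ℚ) - 1 / (2 + eval (b :: s))
      else (a : ℚ) - 1 + 1 / (2 + eval ((b :: s).map (fun x => -x))) := by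
  rw [eval]

lemma valid_singleton (a : ℤ) : Valid [a] := ⟨by simp, by simp⟩

lemma valid_cons_cons {a b : ℤ} {s : List ℤ} :
    Valid (a :: b :: s) ↔ Valid (b :: s) ∧ (s = [] ∨ b ≠ 0) := by
  rcases s with _ | ⟨c, s⟩ <;> simp [Valid, and_comm]

lemma valid_map_neg {l : List ℤ} (h : Valid l) : Valid (l.map (fun x => -x)) := by
  obtain ⟨h1, h2⟩ := h
  refine ⟨by simpa using h1, ?_⟩
  intro x hx
  rw [← List.map_drop, ← List.map_dropLast, List.mem_map] at hx
  obtain ⟨y, hy, rfl⟩ := hx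
  simpa using h2 y hy

lemma map_neg_map_neg (l : List ℤ) :
    (l.map (fun x : ℤ => -x)).map (fun x : ℤ => -x) = l := by
  simp [List.map_map, Function.comp_def]

theorem eval_bounds : ∀ (r : List ℤ) (a : ℤ), Valid (a :: r) →
    (r = [] → eval (a :: r) = a) ∧
    (r ≠ [] → ((a : ℚ) - 1 < eval (a :: r) ∧ eval (a :: r) < a ∧
      ((a : ℚ) - 1/2 ≤ eval (a :: r) ↔ 0 ≤ r.head!)))
  | [], a, _ => ⟨fun _ => eval_singleton a, fun h => absurd rfl h⟩
  | b :: s, a, h => by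
      obtain ⟨hv, hbs⟩ := valid_cons_cons.mp h
      refine ⟨fun h => by simp at h, fun _ => ?_⟩
      simp only [List.head!_cons]
      by_cases hb : 0 ≤ b
      · -- positive branch
        have ht : 0 ≤ eval (b :: s) := by
          rcases hseq : s with _ | ⟨c, s2⟩ <;> subst hseq
          · rw [eval_singleton]; exact_mod_cast hb
          · have hb0 : b ≠ 0 := hbs.resolve_left (by simp)
            have hb1 : 1 ≤ b := lt_of_le_of_ne hb (Ne.symm hb0)
            have := ((eval_bounds (c :: s2) b hv).2 (by simp)).1
            have hcast : (1 : ℚ) ≤ (b : ℚ) := by exact_mod_cast hb1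
            linarith
        have h2t : (0 : ℚ) < 2 + eval (b :: s) := by linarith
        have hle : 1 / (2 + eval (b :: s)) ≤ 1 / 2 := by
          apply one_div_le_one_div_of_le <;> linarith
        have hpos : 0 < 1 / (2 + eval (b :: s)) := by positivity
        rw [eval_cons_cons, if_pos hb]
        exact ⟨by linarith, by linarith, ⟨fun _ => hb, fun _ => by linarith⟩⟩
      · -- negative branch
        push_neg at hb
        have hvm : Valid ((b :: s).map (fun x => -x)) := valid_map_neg hv
        have hb1 : 1 ≤ -b := by omega
        have hb1' : (1 : ℚ) ≤ ((-b : ℤ) : ℚ) := by exact_mod_cast hb1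
        have ht : 0 < eval ((b :: s).map (fun x => -x)) := by
          rcases hseq : s with _ | ⟨c, s2⟩ <;> subst hseq
          · simp only [List.map_cons, List.map_nil, eval_singleton]
            push_cast at hb1' ⊢; linarith
          · have hm : (b :: c :: s2).map (fun x => -x)
                = (-b) :: ((c :: s2).map (fun x => -x)) := by simp
            rw [hm] at hvm ⊢
            have := ((eval_bounds ((c :: s2).map (fun x => -x)) (-b) hvm).2 (by simp)).1
            push_cast at this hb1' ⊢
            linarith
        have h2t : (0 : ℚ) < 2 + eval ((b :: s).map (fun x => -x)) := by linarith
        have hlt : 1 / (2 + eval ((b :: s).map (fun x => -x))) < 1 / 2 := by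
          apply one_div_lt_one_div_of_lt <;> linarith
        have hpos : 0 < 1 / (2 + eval ((b :: s).map (fun x => -x))) := by positivity
        rw [eval_cons_cons, if_neg (by omega : ¬ (0 ≤ b))]
        refine ⟨by linarith, by linarith, ⟨fun h' => by linarith, fun h' => by omega⟩⟩
termination_by r => r.length
decreasing_by all_goals simp_all

lemma eval_le_head {b : ℤ} {s : List ℤ} (h : Valid (b :: s)) : eval (b :: s) ≤ b := by
  rcases s with _ | ⟨c, s⟩
  · rw [eval_singleton]
  · exact le_of_lt ((eval_bounds _ b h).2 (by simp)).2.1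

lemma eval_gt_head_sub_one {b : ℤ} {s : List ℤ} (h : Valid (b :: s)) :
    (b : ℚ) - 1 < eval (b :: s) := by
  rcases s with _ | ⟨c, s⟩
  · rw [eval_singleton]; linarith
  · exact ((eval_bounds _ b h).2 (by simp)).1

lemma eval_tail_nonneg {b : ℤ} {s : List ℤ} (h : Valid (b :: s)) (hb : 0 ≤ b)
    (hbs : s = [] ∨ b ≠ 0) : 0 ≤ eval (b :: s) := by
  rcases hbs with rfl | hb0
  · rw [eval_singleton]; exact_mod_cast hb
  · have h1 : 1 ≤ b := lt_of_le_of_ne hb (Ne.symm hb0)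
    have := eval_gt_head_sub_one h
    have : (1 : ℚ) ≤ (b : ℚ) := by exact_mod_cast h1
    linarith [eval_gt_head_sub_one h]

theorem eval_inj : ∀ (l l' : List ℤ), Valid l → Valid l' → eval l = eval l' → l = l'
  | [], _, h, _, _ => absurd rfl h.1
  | _ :: _, [], _, h', _ => absurd rfl h'.1
  | a :: r, a' :: r', h, h', he => by
      -- first entries are equal
      have B := eval_bounds r a h
      have B' := eval_bounds r' a' h'
      have haa : a = a' := by
        have h1 : (a : ℚ) - 1 < eval (a :: r) := eval_gt_head_sub_one h
        have h2 : eval (a :: r) ≤ a := eval_le_head h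
        have h3 : (a' : ℚ) - 1 < eval (a' :: r') := eval_gt_head_sub_one h'
        have h4 : eval (a' :: r') ≤ a' := eval_le_head h'
        have : (a : ℚ) < a' + 1 ∧ (a' : ℚ) < a + 1 := by constructor <;> linarith
        have := this
        exact_mod_cast by
          have h5 : (a : ℚ) < ((a' + 1 : ℤ) : ℚ) := by push_cast; linarith
          have h6 : (a' : ℚ) < ((a + 1 : ℤ) : ℚ) := by push_cast; linarith
          have h5' : a < a' + 1 := by exact_mod_cast h5
          have h6' : a' < a + 1 := by exact_mod_cast h6
          omega
      subst haa
      -- both tails empty or both nonempty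
      rcases hr : r with _ | ⟨b, s⟩ <;> rcases hr' : r' with _ | ⟨b', s'⟩
      · rfl
      · exfalso
        subst hr hr'
        have h1 : eval (a :: ([] : List ℤ)) = a := (eval_bounds _ a h).1 rfl
        have h2 : eval (a :: b' :: s') < a := ((eval_bounds _ a h').2 (by simp)).2.1
        rw [← he, h1] at h2
        exact absurd h2 (lt_irrefl _)
      · exfalso
        subst hr hr'
        have h1 : eval (a :: ([] : List ℤ)) = a := (eval_bounds _ a h').1 rfl
        have h2 : eval (a :: b :: s) < a := ((eval_bounds _ a h).2 (by simp)).2.1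
        rw [he, h1] at h2
        exact absurd h2 (lt_irrefl _)
      · subst hr hr'
        -- signs of b and b' agree
        have hsgn : 0 ≤ b ↔ 0 ≤ b' := by
          have i1 := ((eval_bounds _ a h).2 (by simp)).2.2
          have i2 := ((eval_bounds _ a h').2 (by simp)).2.2
          simp only [List.head!_cons] at i1 i2
          rw [he] at i1
          exact i1.symm.trans i2
        obtain ⟨hv, hbs⟩ := valid_cons_cons.mp h
        obtain ⟨hv', hbs'⟩ := valid_cons_cons.mp h'
        by_cases hb : 0 ≤ b
        · have hb' : 0 ≤ b' := hsgn.mp hb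
          rw [eval_cons_cons, if_pos hb, eval_cons_cons, if_pos hb'] at he
          have t1 : 0 ≤ eval (b :: s) := eval_tail_nonneg hv hb hbs
          have t2 : 0 ≤ eval (b' :: s') := eval_tail_nonneg hv' hb' hbs'
          have hne1 : 2 + eval (b :: s) ≠ 0 := by linarith
          have hne2 : 2 + eval (b' :: s') ≠ 0 := by linarith
          have : eval (b :: s) = eval (b' :: s') := by
            field_simp at he
            linarith
          have := eval_inj (b :: s) (b' :: s') hv hv' this
          rw [this]
        · have hb' : ¬ 0 ≤ b' := fun hh => hb (hsgn.mpr hh)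
          rw [eval_cons_cons, if_neg hb, eval_cons_cons, if_neg hb'] at he
          simp only [List.map_cons] at he
          have hvm : Valid (-b :: s.map (fun x => -x)) := by
            simpa using valid_map_neg hv
          have hvm' : Valid (-b' :: s'.map (fun x => -x)) := by
            simpa using valid_map_neg hv'
          have t1 : 0 ≤ eval (-b :: s.map (fun x => -x)) := by
            refine eval_tail_nonneg hvm (by omega) ?_
            rcases hbs with rfl | h0
            · left; simp
            · right; omega
          have t2 : 0 ≤ eval (-b' :: s'.map (fun x => -x)) := by
            refine eval_tail_nonneg hvm' (by omega) ?_
            rcases hbs' with rfl | h0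
            · left; simp
            · right; omega
          have hne1 : 2 + eval (-b :: s.map (fun x => -x)) ≠ 0 := by linarith
          have hne2 : 2 + eval (-b' :: s'.map (fun x => -x)) ≠ 0 := by linarith
          have heq : eval (-b :: s.map (fun x => -x)) = eval (-b' :: s'.map (fun x => -x)) := by
            field_simp at he
            linarith
          have hmm := eval_inj (-b :: s.map (fun x => -x)) (-b' :: s'.map (fun x => -x))
            hvm hvm' heq
          injection hmm with hh1 hh2
          have hb2 : b = b' := by omega
          have hs2 : s = s' := by
            have h3 := congrArg (List.map (fun x : ℤ => -x)) hh2
            simpa [map_neg_map_neg] using h3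
          rw [hb2, hs2]
termination_by l _ => l.length
decreasing_by all_goals (subst_vars; simp)

lemma rat_mul_den (q : ℚ) : q * (q.den : ℚ) = (q.num : ℚ) := by
  have hden : (q.den : ℚ) ≠ 0 := by positivity
  nth_rewrite 1 [← Rat.num_div_den q]
  exact div_mul_cancel₀ _ hden

lemma den_add_intCast (q : ℚ) (n : ℤ) : (q + n).den = q.den := by
  have hd : (0 : ℤ) < (q.den : ℤ) := by exact_mod_cast q.pos
  have hden : ((q.den : ℤ) : ℚ) ≠ 0 := by positivity
  have h0 : IsCoprime q.num ((q.den : ℤ)) := by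
    rw [Int.isCoprime_iff_gcd_eq_one]; exact q.reduced
  have hcop : IsCoprime (q.num + n * (q.den : ℤ)) ((q.den : ℤ)) :=
    h0.add_mul_right_left n
  have heq : q + n = ((q.num + n * (q.den : ℤ) : ℤ) : ℚ) / ((q.den : ℤ) : ℚ) := by
    rw [eq_div_iff hden]
    push_cast
    rw [add_mul]
    congr 1
    push_cast [← rat_mul_den q]
    ring
  have h4 := Rat.den_div_eq_of_coprime hd (Int.isCoprime_iff_gcd_eq_one.mp hcop)
  rw [heq]
  exact_mod_cast h4

lemma den_inv_pos (q : ℚ) (hq : 0 < q) : (q⁻¹).den = q.num.natAbs := by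
  have hn : 0 < q.num := Rat.num_pos.mpr hq
  have key : q⁻¹ = (((q.den : ℤ)) : ℚ) / ((q.num : ℤ) : ℚ) := by
    have h1 : q⁻¹ = ((q.num : ℚ) / (q.den : ℚ))⁻¹ := by rw [Rat.num_div_den]
    rw [h1, inv_div]
    norm_cast
  have hcop : Nat.Coprime ((q.den : ℤ)).natAbs q.num.natAbs := by
    simpa using q.reduced.symm
  have h4 := Rat.den_div_eq_of_coprime hn hcop
  rw [key]
  omega

theorem eval_surj (q : ℚ) : ∃ l : List ℤ, Valid l ∧ eval l = q := by
  by_cases hq : ((⌈q⌉ : ℤ) : ℚ) = q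
  · exact ⟨[⌈q⌉], valid_singleton _, by rw [eval_singleton, hq]⟩
  · set a := ⌈q⌉ with ha
    have hql : q < a := lt_of_le_of_ne (Int.le_ceil q) (Ne.symm hq)
    have hqg : (a : ℚ) - 1 < q := by
      have := Int.ceil_lt_add_one q
      rw [← ha] at this
      linarith
    have hden1 : 1 < q.den := by
      rcases Nat.lt_or_ge 1 q.den with h | h
      · exact h
      · exfalso
        have hpos := q.pos
        have hd1 : q.den = 1 := by omega
        have hq' : (q.num : ℚ) = q := (Rat.den_eq_one_iff q).mp hd1
        have hceil : ⌈q⌉ = q.num := by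
          conv_lhs => rw [← hq']
          rw [Int.ceil_intCast]
        exact hq (by rw [ha, hceil, hq'])
    set f : ℚ := (a : ℚ) - q with hfdef
    have hf0 : 0 < f := by rw [hfdef]; linarith
    have hf1 : f < 1 := by rw [hfdef]; linarith
    have hfden : f.den = q.den := by
      have : f = -q + ((a : ℤ) : ℚ) := by rw [hfdef]; ring
      rw [this, den_add_intCast, Rat.den_neg_eq_den]
    by_cases hhalf : f ≤ 1/2
    · -- positive branch
      set t : ℚ := 1/f - 2 with htdef
      have htden : t.den < q.den := by
        have h1 : t = f⁻¹ + ((-2 : ℤ) : ℚ) := by rw [htdef, one_div]; push_cast; ring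
        rw [h1, den_add_intCast, den_inv_pos f hf0]
        have h2 : f.num < f.den := Rat.lt_one_iff_num_lt_denom.mpr hf1
        have h3 : 0 < f.num := Rat.num_pos.mpr hf0
        rw [← hfden]
        omega
      obtain ⟨l, hl, hle⟩ := eval_surj t
      have ht0 : 0 ≤ t := by
        have : 2 ≤ 1/f := by rw [le_div_iff₀ hf0]; linarith
        rw [htdef]; linarith
      rcases l with _ | ⟨b, s⟩
      · exact absurd rfl hl.1
      · have hble : t ≤ (b : ℚ) := hle ▸ eval_le_head hl
        have hb0 : 0 ≤ b := by exact_mod_cast le_trans ht0 hble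
        have hbs : s = [] ∨ b ≠ 0 := by
          rcases s with _ | ⟨c, s2⟩
          · exact Or.inl rfl
          · right
            intro hb00
            have hlt : eval (b :: c :: s2) < (b : ℚ) :=
              ((eval_bounds (c :: s2) b hl).2 (by simp)).2.1
            rw [hle, hb00] at hlt
            push_cast at hlt
            linarith
        refine ⟨a :: b :: s, valid_cons_cons.mpr ⟨hl, hbs⟩, ?_⟩
        rw [eval_cons_cons, if_pos hb0, hle, htdef]
        have h2 : 2 + (1/f - 2) = 1/f := by ring
        rw [h2, one_div_one_div, hfdef]
        ring
    · -- negative branch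
      push_neg at hhalf
      set g : ℚ := q - ((a : ℚ) - 1) with hgdef
      have hg0 : 0 < g := by rw [hgdef]; linarith
      have hg2 : g < 1/2 := by
        have : g = 1 - f := by rw [hgdef, hfdef]; ring
        rw [this]; linarith
      set t : ℚ := 1/g - 2 with htdef
      have htden : t.den < q.den := by
        have h1 : t = g⁻¹ + ((-2 : ℤ) : ℚ) := by rw [htdef, one_div]; push_cast; ring
        have hgden : g.den = q.den := by
          have : g = q + ((1 - a : ℤ) : ℚ) := by rw [hgdef]; push_cast; ring
          rw [this, den_add_intCast]
        have h2 : g.num < g.den := Rat.lt_one_iff_num_lt_denom.mpr (by linarith)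
        have h3 : 0 < g.num := Rat.num_pos.mpr hg0
        rw [h1, den_add_intCast, den_inv_pos g hg0, ← hgden]
        omega
      obtain ⟨l, hl, hle⟩ := eval_surj t
      have ht0 : 0 < t := by
        have : 2 < 1/g := by rw [lt_div_iff₀ hg0]; linarith
        rw [htdef]; linarith
      rcases l with _ | ⟨b, s⟩
      · exact absurd rfl hl.1
      · have hble : t ≤ (b : ℚ) := hle ▸ eval_le_head hl
        have hb1 : 1 ≤ b := by
          have : (0 : ℚ) < (b : ℚ) := lt_of_lt_of_le ht0 hble
          have : 0 < b := by exact_mod_cast this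
          omega
        have hvm : Valid (-b :: s.map (fun x : ℤ => -x)) := by
          simpa using valid_map_neg hl
        refine ⟨a :: -b :: s.map (fun x : ℤ => -x),
          valid_cons_cons.mpr ⟨hvm, Or.inr (by omega)⟩, ?_⟩
        rw [eval_cons_cons, if_neg (by omega : ¬ (0 ≤ -b))]
        have hmm : ((-b :: s.map (fun x : ℤ => -x)) : List ℤ).map (fun x => -x) = b :: s := by
          simp [map_neg_map_neg]
        rw [hmm, hle, htdef]
        have h2 : 2 + (1/g - 2) = 1/g := by ring
        rw [h2, one_div_one_div, hgdef]
        ring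
termination_by q.den
decreasing_by all_goals assumption

theorem eval_bijective_on_valid :
    ∀ q : ℚ, ∃! l : List ℤ, Valid l ∧ eval l = q := by
  intro q
  obtain ⟨l, hl, hle⟩ := eval_surj q
  exact ⟨l, ⟨hl, hle⟩, fun l' ⟨hl', hle'⟩ => eval_inj l' l hl' hl (hle'.trans hle.symm)⟩
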